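/- Assume (H1)–(H3) and (A1), and let u₋ be a viscosity solution of H(x, ∂ₓu, u) = 0. Then there exist δ₀ > 0 and m > 0 such that the function ω₁(x,t) = u₋(x) − δ₀ e^{−mt} is a viscosity subsolution of the evolution equation ∂ₜw + H(x, ∂ₓw, w) = 0 on M × (0,∞), and the function ω₂(x,t) = u₋(x) + δ₀ e^{−mt} is a viscosity supersolution of the same equation. -/

import Mathlib

/-!
Framework: contact Hamiltonian systems on a closed manifold.

`M` is a closed (compact, boundaryless), connected smooth manifold modelled on a
finite-dimensional real normed space `E`.  Using the canonical identification
`TangentSpace I x = E`, a contact Hamiltonian is a function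
`H : M → (E →L[ℝ] ℝ) → ℝ → ℝ`, i.e. a function on `T*M × ℝ`.
-/

noncomputable section

open scoped Manifold Topology NNReal
open Filter Set

variable {E : Type*} [NormedAddCommGroup E] [NormedSpace ℝ E] [FiniteDimensional ℝ E]
variable {M : Type*} [MetricSpace M] [CompactSpace M] [ConnectedSpace M]
  [ChartedSpace E M]
variable (I : ModelWithCorners ℝ E E) [IsManifold I (⊤ : ℕ∞) M] [I.Boundaryless]

section Defs

variable (H : M → (E →L[ℝ] ℝ) → ℝ → ℝ)

/-- Viscosity subsolution (Crandall–Lions) of the stationary equation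
`H(x, ∂ₓu(x), u(x)) = 0` on `M`. -/
def IsVSubStat (u : M → ℝ) : Prop :=
  Continuous u ∧
    ∀ ψ : M → ℝ, ContMDiff I 𝓘(ℝ, ℝ) 1 ψ → ∀ x₀ : M,
      IsLocalMax (fun x => u x - ψ x) x₀ →
        H x₀ (mfderiv I 𝓘(ℝ, ℝ) ψ x₀) (u x₀) ≤ 0

/-- Viscosity supersolution of the stationary equation `H(x, ∂ₓu(x), u(x)) = 0` on `M`. -/
def IsVSupStat (u : M → ℝ) : Prop :=
  Continuous u ∧
    ∀ ψ : M → ℝ, ContMDiff I 𝓘(ℝ, ℝ) 1 ψ → ∀ x₀ : M,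
      IsLocalMin (fun x => u x - ψ x) x₀ →
        0 ≤ H x₀ (mfderiv I 𝓘(ℝ, ℝ) ψ x₀) (u x₀)

/-- Viscosity solution of `H(x, ∂ₓu(x), u(x)) = 0` on `M`. -/
def IsVSolStat (u : M → ℝ) : Prop := IsVSubStat I H u ∧ IsVSupStat I H u

/-- `𝒮⁻`, the set of viscosity solutions of `H(x, ∂ₓu, u) = 0`. -/
def Sminus : Set (M → ℝ) := {u | IsVSolStat I H u}

/-- `𝒮⁺`, the set of viscosity solutions of `H(x, -∂ₓv, -v) = 0`. -/
def Splus : Set (M → ℝ) := {v | IsVSolStat I (fun x p r => H x (-p) (-r)) v}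

/-- Viscosity subsolution of the evolution equation `∂ₜw + H(x, ∂ₓw, w) = 0`
on `M × (0, ∞)`. -/
def IsVSubEvol (w : M → ℝ → ℝ) : Prop :=
  ContinuousOn (fun q : M × ℝ => w q.1 q.2) (univ ×ˢ Ici 0) ∧
    ∀ ψ : M → ℝ → ℝ,
      ContMDiff (I.prod 𝓘(ℝ, ℝ)) 𝓘(ℝ, ℝ) 1 (fun q : M × ℝ => ψ q.1 q.2) →
      ∀ (x₀ : M) (t₀ : ℝ), 0 < t₀ →
        IsLocalMax (fun q : M × ℝ => w q.1 q.2 - ψ q.1 q.2) (x₀, t₀) →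
        deriv (fun s => ψ x₀ s) t₀ +
          H x₀ (mfderiv I 𝓘(ℝ, ℝ) (fun y => ψ y t₀) x₀) (w x₀ t₀) ≤ 0

/-- Viscosity supersolution of the evolution equation `∂ₜw + H(x, ∂ₓw, w) = 0`
on `M × (0, ∞)`. -/
def IsVSupEvol (w : M → ℝ → ℝ) : Prop :=
  ContinuousOn (fun q : M × ℝ => w q.1 q.2) (univ ×ˢ Ici 0) ∧
    ∀ ψ : M → ℝ → ℝ,
      ContMDiff (I.prod 𝓘(ℝ, ℝ)) 𝓘(ℝ, ℝ) 1 (fun q : M × ℝ => ψ q.1 q.2) →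
      ∀ (x₀ : M) (t₀ : ℝ), 0 < t₀ →
        IsLocalMin (fun q : M × ℝ => w q.1 q.2 - ψ q.1 q.2) (x₀, t₀) →
        0 ≤ deriv (fun s => ψ x₀ s) t₀ +
          H x₀ (mfderiv I 𝓘(ℝ, ℝ) (fun y => ψ y t₀) x₀) (w x₀ t₀)

/-- Viscosity solution of the evolution equation `∂ₜw + H(x, ∂ₓw, w) = 0`. -/
def IsVSolEvol (w : M → ℝ → ℝ) : Prop := IsVSubEvol I H w ∧ IsVSupEvol I H w

/-- (H1): the fiberwise Hessian `∂²H/∂p²` is positive definite. -/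
def CondH1 : Prop :=
  ∀ (x : M) (r : ℝ) (p v : E →L[ℝ] ℝ), v ≠ 0 →
    0 < iteratedFDeriv ℝ 2 (fun q => H x q r) p ![v, v]

/-- (H2): `H(x, ·, u)` is superlinear for each `(x, u)`. -/
def CondH2 : Prop :=
  ∀ (x : M) (r K : ℝ), ∃ C : ℝ, ∀ p : E →L[ℝ] ℝ, K * ‖p‖ - C ≤ H x p r

/-- (H3): `|∂H/∂u| ≤ κ` for some `κ > 0`. -/
def CondH3 : Prop :=
  ∃ κ : ℝ, 0 < κ ∧ ∀ (x : M) (p : E →L[ℝ] ℝ) (r : ℝ),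
    |deriv (fun s => H x p s) r| ≤ κ

/-- `H` is `C³` on `T*M × ℝ`. -/
def CondC3 : Prop :=
  ContMDiff (I.prod 𝓘(ℝ, (E →L[ℝ] ℝ) × ℝ)) 𝓘(ℝ, ℝ) 3
    (fun q : M × ((E →L[ℝ] ℝ) × ℝ) => H q.1 q.2.1 q.2.2)

/-- (A1): `∂H/∂u > 0` on the zero level set `{H = 0}`. -/
def CondA1 : Prop :=
  ∀ (x : M) (p : E →L[ℝ] ℝ) (r : ℝ), H x p r = 0 → 0 < deriv (fun s => H x p s) r

/-- (A2): `∂H/∂u ≥ 0` everywhere. -/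
def CondA2 : Prop :=
  ∀ (x : M) (p : E →L[ℝ] ℝ) (r : ℝ), 0 ≤ deriv (fun s => H x p s) r

/-- The backward and forward Lax–Oleinik semigroups `T_t⁻`, `T_t⁺` associated with `H`:
`(x, t) ↦ T_t⁻φ(x)` is the unique viscosity solution of `∂ₜw + H(x, ∂ₓw, w) = 0` with
initial condition `φ`, and `(x, t) ↦ -T_t⁺φ(x)` is the unique viscosity solution of the
dual equation `∂ₜw + H(x, -∂ₓw, -w) = 0` with initial condition `-φ`. -/
structure LaxOleinik where
  Tm : ℝ → (M → ℝ) → M → ℝ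
  Tp : ℝ → (M → ℝ) → M → ℝ
  Tm_init : ∀ φ : M → ℝ, Continuous φ → ∀ x : M, Tm 0 φ x = φ x
  Tm_sol : ∀ φ : M → ℝ, Continuous φ → IsVSolEvol I H (fun x t => Tm t φ x)
  Tm_unique : ∀ φ : M → ℝ, Continuous φ → ∀ w : M → ℝ → ℝ, IsVSolEvol I H w →
    (∀ x : M, w x 0 = φ x) → ∀ x : M, ∀ t : ℝ, 0 ≤ t → w x t = Tm t φ x
  Tp_init : ∀ φ : M → ℝ, Continuous φ → ∀ x : M, Tp 0 φ x = φ x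
  Tp_sol : ∀ φ : M → ℝ, Continuous φ →
    IsVSolEvol I (fun x p r => H x (-p) (-r)) (fun x t => - Tp t φ x)
  Tp_unique : ∀ φ : M → ℝ, Continuous φ → ∀ w : M → ℝ → ℝ,
    IsVSolEvol I (fun x p r => H x (-p) (-r)) w →
    (∀ x : M, w x 0 = - φ x) → ∀ x : M, ∀ t : ℝ, 0 ≤ t → w x t = - Tp t φ x

/-- The implicit action function `h_{x₀,u₀}(x,t)` of Wang–Wang–Yan, characterized here
through the Markov-type property `h_{x₀,u₀}(x, t+s) = T_s⁻ h_{x₀,u₀}(·,t)(x)`. -/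
structure ImplicitAction (S : LaxOleinik I H) where
  h : M → ℝ → M → ℝ → ℝ
  cont : ContinuousOn (fun q : (M × ℝ) × M × ℝ => h q.1.1 q.1.2 q.2.1 q.2.2)
    {q : (M × ℝ) × M × ℝ | 0 < q.2.2}
  markov : ∀ (x₀ : M) (u₀ : ℝ) (t s : ℝ), 0 < t → 0 ≤ s →
    ∀ x : M, h x₀ u₀ x (t + s) = S.Tm s (fun y => h x₀ u₀ y t) x

/-- The contact Lagrangian `L(x, v, u)`, dual to `H` via the fiberwise Legendre
transform: `L(x,v,u) = sup_p (⟨p, v⟩ - H(x,p,u))`. -/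
def Ldual (x : M) (v : E) (r : ℝ) : ℝ :=
  sSup {a : ℝ | ∃ p : E →L[ℝ] ℝ, a = p v - H x p r}

end Defs

/-- The velocity `ẋ(t) ∈ T_{x(t)}M = E` of a curve `x : ℝ → M`. -/
def velocity (x : ℝ → M) (t : ℝ) : E := mfderiv 𝓘(ℝ, ℝ) I x t (1 : ℝ)

/-- The manifold differential of a real function on `M`, viewed in `E* = E →L[ℝ] ℝ`
via the canonical identification `TangentSpace I x = E`. -/
def covector (u : M → ℝ) (x : M) : E →L[ℝ] ℝ := mfderiv I 𝓘(ℝ, ℝ) u x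

section Defs2

variable (H : M → (E →L[ℝ] ℝ) → ℝ → ℝ)

/-- `(x(t), p(t), u(t))`, `t ∈ s`, is an orbit of the contact Hamiltonian flow `Φ_t^H`:
`ẋ = ∂H/∂p`, `ṗ = -∂H/∂x - (∂H/∂u)p`, `u̇ = p·∂H/∂p - H`
(in the canonical identification `T*M ≃ M × (E →L[ℝ] ℝ)`). -/
def IsContactOrbitOn (x : ℝ → M) (p : ℝ → E →L[ℝ] ℝ) (u : ℝ → ℝ) (s : Set ℝ) : Prop :=
  ∀ t ∈ s,
    (∀ q : E →L[ℝ] ℝ,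
      fderiv ℝ (fun q' => H (x t) q' (u t)) (p t) q = q (velocity I x t)) ∧
    HasDerivAt p
      (-(covector I (fun y => H y (p t) (u t)) (x t))
        - deriv (fun r => H (x t) (p t) r) (u t) • p t) t ∧
    HasDerivAt u (p t (velocity I x t) - H (x t) (p t) (u t)) t

variable {S : LaxOleinik I H}

/-- A positive globally minimizing curve (Definition 3.1): locally Lipschitz on `[0,∞)`
with `u(t₂) = h_{x(t₁),u(t₁)}(x(t₂), t₂ - t₁)` for all `0 ≤ t₁ < t₂`. -/
def PosGlobMin (A : ImplicitAction I H S) (x : ℝ → M) (u : ℝ → ℝ) : Prop :=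
  (∀ a b : ℝ, 0 ≤ a → ∃ K : ℝ≥0, LipschitzOnWith K (fun t => (x t, u t)) (Icc a b)) ∧
    ∀ t₁ t₂ : ℝ, 0 ≤ t₁ → t₁ < t₂ → u t₂ = A.h (x t₁) (u t₁) (x t₂) (t₂ - t₁)

/-- A globally minimizing curve on all of `ℝ`. -/
def GlobMin (A : ImplicitAction I H S) (x : ℝ → M) (u : ℝ → ℝ) : Prop :=
  (∀ a b : ℝ, ∃ K : ℝ≥0, LipschitzOnWith K (fun t => (x t, u t)) (Icc a b)) ∧
    ∀ t₁ t₂ : ℝ, t₁ < t₂ → u t₂ = A.h (x t₁) (u t₁) (x t₂) (t₂ - t₁)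

/-- A semi-static curve: globally minimizing and
`u(t₂) = inf_{s>0} h_{x(t₁),u(t₁)}(x(t₂), s)` for all `t₁ ≤ t₂`. -/
def SemiStatic (A : ImplicitAction I H S) (x : ℝ → M) (u : ℝ → ℝ) : Prop :=
  GlobMin I H A x u ∧
    ∀ t₁ t₂ : ℝ, t₁ ≤ t₂ →
      u t₂ = sInf {a : ℝ | ∃ s : ℝ, 0 < s ∧ a = A.h (x t₁) (u t₁) (x t₂) s}

/-- The momentum along a positively globally minimizing curve:
`p(t) = ∂L/∂v(x(t), ẋ(t), u(t))`. A positive globally minimizing orbit is a positive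
globally minimizing curve together with this momentum. -/
def PosGlobMinOrbit (A : ImplicitAction I H S) (x : ℝ → M) (p : ℝ → E →L[ℝ] ℝ)
    (u : ℝ → ℝ) : Prop :=
  PosGlobMin I H A x u ∧
    ∀ t : ℝ, 0 ≤ t →
      p t = fderiv ℝ (fun v => Ldual H (x t) v (u t)) (velocity I x t)

/-- `Λ_{u₋}`: the closure of the 1-graph of `u₋` over its differentiability points. -/
def LambdaSet (um : M → ℝ) : Set (M × (E →L[ℝ] ℝ) × ℝ) :=
  closure {z | ∃ x : M, MDifferentiableAt I 𝓘(ℝ, ℝ) um x ∧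
    z = (x, covector I um x, um x)}

/-- The Mañé set `𝒩̃_{u₋}` associated with `u₋` and `u₊ = lim_{t→∞} T_t⁺u₋`:
`{(x,p,u) : u = u₋(x) = u₊(x), p = d_xu₋(x) = d_xu₊(x)}`. -/
def ManeSet (um up : M → ℝ) : Set (M × (E →L[ℝ] ℝ) × ℝ) :=
  {z | z.2.2 = um z.1 ∧ z.2.2 = up z.1 ∧
    MDifferentiableAt I 𝓘(ℝ, ℝ) um z.1 ∧ MDifferentiableAt I 𝓘(ℝ, ℝ) up z.1 ∧
    z.2.1 = covector I um z.1 ∧ z.2.1 = covector I up z.1}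

end Defs2

/-- The ω-limit set of a curve `γ(t)` as `t → +∞`: the set of its cluster points. -/
def omegaSet {X : Type*} [TopologicalSpace X] (γ : ℝ → X) : Set X :=
  {z | MapClusterPt z atTop γ}

/-!
By (A1) and compactness, `∂H/∂u ≥ μ > 0` wherever `|H| < μ`, uniformly for `u` in a compact
interval: the momenta there are bounded because (H1) and (H2) make the sublevel sets of `H`
compact. So if `H(x, p, u₋(x)) ≤ 0`, lowering `u` makes `H` decrease at rate `μ` while `|H| < μ`,
and by (H3) it cannot climb back from below `-μ/2` in a short time; hence
`H(x, p, u₋(x) - ε) ≤ -mε` for `0 ≤ ε ≤ δ₀`. Where a test function `ψ` touches `ω₁` from above,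
its `x`-slice touches `u₋` from above, so `H(x, ∂ₓψ, u₋) ≤ 0`, while `∂ₜψ = ∂ₜω₁ = mε` with
`ε = δ₀e^{-mt}`; together, `∂ₜψ + H(x, ∂ₓψ, u₋ - ε) ≤ 0`. The supersolution case is symmetric.
-/

theorem convexOn_univ_of_iteratedFDeriv_two_nonneg {V : Type*} [NormedAddCommGroup V]
    [NormedSpace ℝ V] {f : V → ℝ} (hf : ContDiff ℝ 2 f)
    (hf₂ : ∀ x v, 0 ≤ iteratedFDeriv ℝ 2 f x ![v, v]) : ConvexOn ℝ univ f := by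
  refine ⟨convex_univ, fun x _ y _ a b ha hb hab => ?_⟩
  have hfx : ContDiff ℝ 2 (fun w => f (x + w)) := hf.comp (contDiff_const.add contDiff_id)
  set g : ℝ → ℝ := (fun w => f (x + w)) ∘ ContinuousLinearMap.toSpanSingleton ℝ (y - x)
  have hg : ContDiff ℝ 2 g := hfx.comp (ContinuousLinearMap.contDiff _)
  have hg₂ : ∀ t, 0 ≤ deriv^[2] g t := fun t => by
    rw [← iteratedDeriv_eq_iterate, iteratedDeriv_eq_iteratedFDeriv,
      ContinuousLinearMap.iteratedFDeriv_comp_right _ hfx _ le_rfl,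
      iteratedFDeriv_comp_add_left]
    convert hf₂ (x + t • (y - x)) (y - x) using 1
    simp only [ContinuousMultilinearMap.compContinuousLinearMap_apply,
      ContinuousLinearMap.toSpanSingleton_apply, one_smul]
    congr 1
    ext i
    fin_cases i <;> rfl
  have hconv := convexOn_univ_of_deriv2_nonneg (hg.differentiable two_ne_zero)
    ((hg.iterate_deriv' 1 1).differentiable one_ne_zero) hg₂
  have hxy : a • x + b • y = x + b • (y - x) := by
    rw [eq_sub_of_add_eq hab]
    module
  simpa [g, hxy] using hconv.2 (mem_univ 0) (mem_univ 1) ha hb hab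

theorem ConvexOn.le_max_zero_of_smul {V : Type*} [AddCommGroup V] [Module ℝ V] {f : V → ℝ}
    (hf : ConvexOn ℝ univ f) {t : ℝ} (ht₀ : 0 ≤ t) (ht₁ : t ≤ 1) (v : V) :
    f (t • v) ≤ max (f 0) (f v) := by
  simpa using hf.le_on_segment' (mem_univ 0) (mem_univ v) (sub_nonneg.2 ht₁) ht₀ (by ring)

theorem IsCompact.exists_norm_le_of_convexOn_superlinear {X V : Type*} [TopologicalSpace X]
    [NormedAddCommGroup V] [NormedSpace ℝ V] [FiniteDimensional ℝ V] {K : Set X}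
    (hK : IsCompact K) {f : X → V → ℝ} (hf : Continuous (Function.uncurry f))
    (hconv : ∀ x, ConvexOn ℝ univ (f x)) (hsup : ∀ x ∈ K, ∃ C, ∀ v, ‖v‖ - C ≤ f x v)
    (c : ℝ) : ∃ R, ∀ x ∈ K, ∀ v, f x v ≤ c → ‖v‖ ≤ R := by
  -- By convexity, `(x, q) ∈ U n` forces `f x v > max c (f x 0)` for every `v = s • q`, `s ≥ n`.
  let U : ℕ → Set (X × V) := fun n => {z | max c (f z.1 0) < f z.1 ((n : ℝ) • z.2)}
  have hU_open : ∀ n, IsOpen (U n) := fun n =>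
    isOpen_lt (continuous_const.max (hf.comp (continuous_fst.prodMk continuous_const)))
      (hf.comp (continuous_fst.prodMk (continuous_const.smul continuous_snd)))
  have hU_mono : Monotone U := by
    intro n n' hnn' z hz
    by_contra hz'
    simp only [U, mem_ofPred_eq, not_lt] at hz hz'
    have hn' : (0 : ℝ) < n' := by
      rcases Nat.eq_zero_or_pos n with rfl | hn
      · simp at hz
      · exact_mod_cast hn.trans_le hnn'
    have hsmul : (n : ℝ) • z.2 = ((n : ℝ) / n') • ((n' : ℝ) • z.2) := by
      rw [smul_smul, div_mul_cancel₀ _ hn'.ne']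
    have := (hconv z.1).le_max_zero_of_smul (t := (n : ℝ) / n') (by positivity)
      ((div_le_one hn').2 (by exact_mod_cast hnn')) ((n' : ℝ) • z.2)
    rw [← hsmul] at this
    exact lt_irrefl _ ((hz.trans_le this).trans_le (max_le (le_max_right _ _) hz'))
  have hcover : K ×ˢ Metric.sphere (0 : V) 1 ⊆ ⋃ n, U n := by
    rintro ⟨x, q⟩ ⟨hx, hq⟩
    rw [mem_sphere_zero_iff_norm] at hq
    obtain ⟨C, hC⟩ := hsup x hx
    obtain ⟨n, hn⟩ := exists_nat_gt (C + max c (f x 0))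
    have hnq : ‖(n : ℝ) • q‖ = n := by rw [norm_smul, hq, mul_one, Real.norm_natCast]
    refine mem_iUnion.2 ⟨n, show max c (f x 0) < f x ((n : ℝ) • q) from ?_⟩
    linarith [hC ((n : ℝ) • q)]
  obtain ⟨N, hN⟩ := (hK.prod (isCompact_sphere 0 1)).elim_directed_cover U hU_open hcover
    hU_mono.directed_le
  refine ⟨N, fun x hx v hv => le_of_not_gt fun hvN => ?_⟩
  have hv0 : 0 < ‖v‖ := (Nat.cast_nonneg N).trans_lt hvN
  have hmem := hN (mk_mem_prod hx
    (by simp [norm_smul, hv0.ne'] : ‖v‖⁻¹ • v ∈ Metric.sphere (0 : V) 1))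
  simp only [U, mem_ofPred_eq, smul_smul] at hmem
  have := (hconv x).le_max_zero_of_smul (t := (N : ℝ) * ‖v‖⁻¹) (by positivity)
    (by rw [← div_eq_mul_inv, div_le_one hv0]; exact hvN.le) v
  exact lt_irrefl _
    ((hmem.trans_le this).trans_le (max_le (le_max_right _ _) (hv.trans (le_max_left _ _))))

theorem IsCompact.exists_pos_le_of_abs_lt {Z : Type*} [TopologicalSpace Z] {K : Set Z}
    (hK : IsCompact K) {F G : Z → ℝ} (hF : ContinuousOn F K) (hG : ContinuousOn G K)
    (hFG : ∀ z ∈ K, F z = 0 → 0 < G z) : ∃ μ > 0, ∀ z ∈ K, |F z| < μ → μ ≤ G z := by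
  -- `max |F| G` is positive on `K`, hence bounded below there by some `μ > 0`.
  obtain ⟨μ, hμ, hμK⟩ := hK.exists_forall_le' (hF.abs.sup hG) fun z hz => by
    rcases eq_or_ne (F z) 0 with h | h
    · exact lt_max_of_lt_right (hFG z hz h)
    · exact lt_max_of_lt_left (abs_pos.2 h)
  exact ⟨μ, hμ, fun z hz hFz => (le_max_iff.1 (hμK z hz)).resolve_left hFz.not_ge⟩

theorem le_neg_mul_of_deriv_le_neg {g : ℝ → ℝ} {κ μ ε : ℝ} (hg : Differentiable ℝ g)
    (hκ : ∀ s, |deriv g s| ≤ κ) (hμ : ∀ s ∈ Icc 0 ε, |g s| < μ → deriv g s ≤ -μ)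
    (h0 : g 0 ≤ 0) (hε : 0 ≤ ε) (hεκμ : (κ + μ) * ε ≤ μ / 2) : g ε ≤ -(μ * ε) := by
  have hlip : ∀ s, |g s - g 0| ≤ κ * |s| := fun s => by
    simpa using convex_univ.norm_image_sub_le_of_norm_deriv_le (fun s _ => hg s)
      (fun s _ => hκ s) (mem_univ 0) (mem_univ s)
  have hκ0 : 0 ≤ κ := (abs_nonneg _).trans (hκ 0)
  -- Either `g` starts below `-μ/2` and cannot climb far enough on `[0, ε]`, or it stays in
  -- `(-μ, μ)` there and so decreases at rate `μ`.
  rcases le_or_gt (g 0) (-(μ / 2)) with hlow | hhigh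
  · have := (abs_le.1 (hlip ε)).2
    rw [abs_of_nonneg hε] at this
    linarith
  · have hμ0 : 0 < μ := by linarith
    have hsmall : ∀ s ∈ Icc 0 ε, |g s| < μ := fun s hs => by
      have := abs_le.1 (hlip s)
      rw [abs_of_nonneg hs.1] at this
      have : κ * s ≤ κ * ε := mul_le_mul_of_nonneg_left hs.2 hκ0
      rw [abs_lt]
      constructor <;> nlinarith
    have := (convex_Icc 0 ε).image_sub_le_mul_sub_of_deriv_le hg.continuous.continuousOn
      hg.differentiableOn
      (fun s hs => hμ s (interior_subset hs) (hsmall s (interior_subset hs)))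
      0 (left_mem_Icc.2 hε) ε (right_mem_Icc.2 hε) hε
    linarith

theorem exists_linear_bounds_near_zero_level {X P : Type*} [TopologicalSpace X]
    [TopologicalSpace P] {H : X → P → ℝ → ℝ}
    (hH : Continuous fun z : X × P × ℝ => H z.1 z.2.1 z.2.2)
    (hH' : Continuous fun z : X × P × ℝ => deriv (H z.1 z.2.1) z.2.2)
    (hdiff : ∀ x p, Differentiable ℝ (H x p)) {κ : ℝ} (hκ : ∀ x p r, |deriv (H x p) r| ≤ κ)
    (hpos : ∀ x p r, H x p r = 0 → 0 < deriv (H x p) r)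
    (hK : ∀ a b, IsCompact {z : X × P × ℝ | z.2.2 ∈ Icc a b ∧ H z.1 z.2.1 z.2.2 ≤ 1})
    (a b : ℝ) :
    ∃ δ > 0, ∃ m > 0, ∀ x p r ε, r ∈ Icc a b → ε ∈ Icc 0 δ →
      (H x p r ≤ 0 → H x p (r - ε) ≤ -(m * ε)) ∧ (0 ≤ H x p r → m * ε ≤ H x p (r + ε)) := by
  obtain ⟨μ₀, hμ₀, hμ₀K⟩ := (hK (a - 1) (b + 1)).exists_pos_le_of_abs_lt hH.continuousOn
    hH'.continuousOn fun z _ => hpos z.1 z.2.1 z.2.2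
  -- Capping at `1` puts every point with `|H| < μ` into the compact set where `H ≤ 1`.
  set μ := min μ₀ 1
  have hμ : 0 < μ := lt_min hμ₀ one_pos
  refine ⟨min 1 (μ / (2 * (|κ| + μ))), by positivity, μ, hμ, fun x p r ε hr hε => ?_⟩
  have hεκμ : (κ + μ) * ε ≤ μ / 2 := by
    have := hε.2.trans (min_le_right _ _)
    rw [le_div_iff₀ (by positivity)] at this
    nlinarith [le_abs_self κ, hε.1]
  have hderiv_ge : ∀ s, |s| ≤ ε → |H x p (r + s)| < μ → μ ≤ deriv (H x p) (r + s) := by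
    intro s hs hHs
    have hs' := abs_le.1 (hs.trans (hε.2.trans (min_le_left _ _)))
    refine (min_le_left _ _).trans (hμ₀K (x, p, r + s) ⟨⟨?_, ?_⟩, ?_⟩ ?_)
    · linarith [hr.1]
    · linarith [hr.2]
    · exact (le_abs_self _).trans (hHs.le.trans (min_le_right _ _))
    · exact hHs.trans_le (min_le_left _ _)
  constructor
  · intro h0
    have := le_neg_mul_of_deriv_le_neg (g := fun s => H x p (r - s))
      ((hdiff x p).comp ((differentiable_const _).sub differentiable_id))
      (fun s => by rw [deriv_comp_const_sub, abs_neg]; exact hκ x p (r - s))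
      (fun s hs hgs => by
        have := hderiv_ge (-s) (by rw [abs_neg, abs_of_nonneg hs.1]; exact hs.2)
          (by simpa [← sub_eq_add_neg] using hgs)
        rw [deriv_comp_const_sub]
        simp only [← sub_eq_add_neg] at this
        linarith)
      (by simpa using h0) hε.1 hεκμ
    simpa using this
  · intro h0
    have := le_neg_mul_of_deriv_le_neg (g := fun s => -H x p (r + s))
      ((hdiff x p).comp ((differentiable_const _).add differentiable_id)).neg
      (fun s => by rw [deriv.fun_neg, deriv_comp_const_add, abs_neg]; exact hκ x p (r + s))
      (fun s hs hgs => by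
        have := hderiv_ge s (by rw [abs_of_nonneg hs.1]; exact hs.2) (by simpa using hgs)
        rw [deriv.fun_neg, deriv_comp_const_add]
        linarith)
      (by simpa using h0) hε.1 hεκμ
    linarith

theorem continuous_deriv_of_contMDiff_uncurry {EN HN N : Type*} [NormedAddCommGroup EN]
    [NormedSpace ℝ EN] [TopologicalSpace HN] [TopologicalSpace N] {J : ModelWithCorners ℝ EN HN}
    [ChartedSpace HN N] [IsManifold J 1 N] {f : N → ℝ → ℝ}
    (hf : ContMDiff (J.prod 𝓘(ℝ, ℝ)) 𝓘(ℝ, ℝ) 1 (Function.uncurry f)) {g : N → ℝ}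
    (hg : ContMDiff J 𝓘(ℝ, ℝ) 1 g) :
    Continuous fun z => deriv (f z) (g z) := by
  refine continuous_iff_continuousAt.2 fun z => ?_
  have := (hf.contMDiffAt.mfderiv (x₀ := z) f g (hg.contMDiffAt.of_le zero_le_one)
    le_rfl).continuousAt
  -- `erw`: the instances in `this` agree only up to unfolding with those of the lemma.
  erw [inTangentCoordinates_model_space] at this
  simp only [mfderiv_eq_fderiv] at this
  exact this.clm_apply continuousAt_const

theorem hasDerivAt_mul_exp_neg_mul (δ m t : ℝ) :
    HasDerivAt (fun s => δ * Real.exp (-m * s)) (-(m * (δ * Real.exp (-m * t)))) t :=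
  (((hasDerivAt_id' t).const_mul (-m)).exp.const_mul δ).congr_deriv (by ring)

theorem mul_exp_neg_mul_mem_Icc {δ m t : ℝ} (hδ : 0 ≤ δ) (hm : 0 ≤ m) (ht : 0 ≤ t) :
    δ * Real.exp (-m * t) ∈ Icc 0 δ :=
  ⟨by positivity, mul_le_of_le_one_right hδ (Real.exp_le_one_iff.2 (by nlinarith))⟩

theorem deriv_eq_of_isLocalExtr_sub {θ φ : ℝ → ℝ} {t₀ θ' : ℝ}
    (h : IsLocalExtr (fun t => θ t - φ t) t₀) (hθ : HasDerivAt θ θ' t₀)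
    (hφ : DifferentiableAt ℝ φ t₀) : deriv φ t₀ = θ' :=
  (sub_eq_zero.1 (h.hasDerivAt_eq_zero (hθ.sub hφ.hasDerivAt))).symm

section ContactHamiltonian

variable {E : Type*} [NormedAddCommGroup E] [NormedSpace ℝ E] {M : Type*} [MetricSpace M]
  [ChartedSpace E M] {I : ModelWithCorners ℝ E E} {H : M → (E →L[ℝ] ℝ) → ℝ → ℝ}

theorem CondC3.continuous_deriv [IsManifold I 1 M] (hC3 : CondC3 I H) :
    Continuous fun z : M × (E →L[ℝ] ℝ) × ℝ => deriv (H z.1 z.2.1) z.2.2 := by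
  have hsmooth : ContMDiff ((I.prod 𝓘(ℝ, (E →L[ℝ] ℝ) × ℝ)).prod 𝓘(ℝ, ℝ)) 𝓘(ℝ, ℝ) 1
      fun q : (M × (E →L[ℝ] ℝ) × ℝ) × ℝ => H q.1.1 q.1.2.1 q.2 :=
    (hC3.of_le (by norm_num)).comp (contMDiff_fst.fst.prodMk
      ((contDiff_fst.contMDiff.comp contMDiff_fst.snd).prodMk_space contMDiff_snd))
  exact continuous_deriv_of_contMDiff_uncurry (f := fun z s => H z.1 z.2.1 s) hsmooth
    (contDiff_snd.contMDiff.comp contMDiff_snd)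

theorem CondC3.contDiff_fiber (hC3 : CondC3 I H) (x : M) :
    ContDiff ℝ 3 fun q : (E →L[ℝ] ℝ) × ℝ => H x q.1 q.2 :=
  contMDiff_iff_contDiff.1 (hC3.comp (contMDiff_const.prodMk contMDiff_id))

theorem CondC3.differentiable (hC3 : CondC3 I H) (x : M) (p : E →L[ℝ] ℝ) :
    Differentiable ℝ (H x p) :=
  ((hC3.contDiff_fiber x).comp (contDiff_const.prodMk contDiff_id)).differentiable
    (by norm_num)

theorem CondH1.convexOn (hH1 : CondH1 H) (hC3 : CondC3 I H) (x : M) (r : ℝ) :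
    ConvexOn ℝ univ fun p => H x p r := by
  refine convexOn_univ_of_iteratedFDeriv_two_nonneg
    (((hC3.contDiff_fiber x).comp (contDiff_id.prodMk contDiff_const)).of_le (by norm_num))
    fun p v => ?_
  rcases eq_or_ne v 0 with rfl | hv
  · exact ((iteratedFDeriv ℝ 2 _ p).map_coord_zero 0 rfl).ge
  · exact (hH1 x r p v hv).le

theorem CondH2.isCompact_sublevel [CompactSpace M] [FiniteDimensional ℝ E] (hH2 : CondH2 H)
    (hC3 : CondC3 I H) (hH1 : CondH1 H) (a b c : ℝ) :
    IsCompact {z : M × (E →L[ℝ] ℝ) × ℝ | z.2.2 ∈ Icc a b ∧ H z.1 z.2.1 z.2.2 ≤ c} := by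
  have hK : IsCompact ((univ : Set M) ×ˢ Icc a b) := isCompact_univ.prod isCompact_Icc
  obtain ⟨R, hR⟩ := hK.exists_norm_le_of_convexOn_superlinear
    (f := fun (y : M × ℝ) p => H y.1 p y.2)
    (hC3.continuous.comp (continuous_fst.fst.prodMk (continuous_snd.prodMk continuous_fst.snd)))
    (fun y => hH1.convexOn hC3 y.1 y.2) (fun y _ => by simpa using hH2 y.1 y.2 1) c
  refine (isCompact_univ.prod ((isCompact_closedBall 0 R).prod
    (isCompact_Icc (a := a) (b := b)))).of_isClosed_subset
    ((isClosed_Icc.preimage (continuous_snd.comp continuous_snd)).inter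
      (isClosed_le hC3.continuous continuous_const)) ?_
  rintro ⟨x, p, r⟩ ⟨hr, hH⟩
  exact ⟨mem_univ x, mem_closedBall_zero_iff.2 (hR (x, r) ⟨mem_univ x, hr⟩ p hH), hr⟩

theorem IsVSubStat.isVSubEvol_sub_exp {u : M → ℝ} (hu : IsVSubStat I H u) {δ m : ℝ}
    (hδ : 0 ≤ δ) (hm : 0 ≤ m)
    (hdec : ∀ x p, ∀ ε ∈ Icc 0 δ, H x p (u x) ≤ 0 → H x p (u x - ε) ≤ -(m * ε)) :
    IsVSubEvol I H (fun x t => u x - δ * Real.exp (-m * t)) := by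
  refine ⟨by have := hu.1; fun_prop, fun ψ hψ x₀ t₀ ht₀ hmax => ?_⟩
  have hx : IsLocalMax (fun y => u y - ψ y t₀) x₀ :=
    (hmax.comp_continuous (g := fun y => (y, t₀)) (b := x₀) (by fun_prop)).mono fun y hy => by
      simp only [Function.comp_apply] at hy
      linarith
  have ht : deriv (ψ x₀) t₀ = m * (δ * Real.exp (-m * t₀)) := by
    refine deriv_eq_of_isLocalExtr_sub (θ := fun t => u x₀ - δ * Real.exp (-m * t))
      (IsMaxFilter.isExtr (hmax.comp_continuous (g := Prod.mk x₀) (by fun_prop))) ?_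
      ((contMDiff_iff_contDiff.1 (hψ.curry_right (x := x₀))).differentiable one_ne_zero t₀)
    simpa using (hasDerivAt_mul_exp_neg_mul δ m t₀).const_sub (u x₀)
  rw [ht]
  linarith [hdec x₀ _ _ (mul_exp_neg_mul_mem_Icc hδ hm ht₀.le)
    (hu.2 _ (hψ.curry_left (y := t₀)) x₀ hx)]

theorem IsVSupStat.isVSupEvol_add_exp {u : M → ℝ} (hu : IsVSupStat I H u) {δ m : ℝ}
    (hδ : 0 ≤ δ) (hm : 0 ≤ m)
    (hinc : ∀ x p, ∀ ε ∈ Icc 0 δ, 0 ≤ H x p (u x) → m * ε ≤ H x p (u x + ε)) :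
    IsVSupEvol I H (fun x t => u x + δ * Real.exp (-m * t)) := by
  refine ⟨by have := hu.1; fun_prop, fun ψ hψ x₀ t₀ ht₀ hmin => ?_⟩
  have hx : IsLocalMin (fun y => u y - ψ y t₀) x₀ :=
    (hmin.comp_continuous (g := fun y => (y, t₀)) (b := x₀) (by fun_prop)).mono fun y hy => by
      simp only [Function.comp_apply] at hy
      linarith
  have ht : deriv (ψ x₀) t₀ = -(m * (δ * Real.exp (-m * t₀))) := by
    refine deriv_eq_of_isLocalExtr_sub (θ := fun t => u x₀ + δ * Real.exp (-m * t))
      (IsMinFilter.isExtr (hmin.comp_continuous (g := Prod.mk x₀) (by fun_prop))) ?_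
      ((contMDiff_iff_contDiff.1 (hψ.curry_right (x := x₀))).differentiable one_ne_zero t₀)
    simpa using (hasDerivAt_mul_exp_neg_mul δ m t₀).const_add (u x₀)
  rw [ht]
  linarith [hinc x₀ _ _ (mul_exp_neg_mul_mem_Icc hδ hm ht₀.le)
    (hu.2 _ (hψ.curry_left (y := t₀)) x₀ hx)]

end ContactHamiltonian

/-- under (H1)–(H3) and (A1), for a viscosity solution `u₋` there are
`δ₀ > 0`, `m > 0` such that `ω₁(x,t) = u₋(x) − δ₀e^{−mt}` is a viscosity subsolution and
`ω₂(x,t) = u₋(x) + δ₀e^{−mt}` a viscosity supersolution of `∂ₜw + H(x,∂ₓw,w) = 0`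
on `M × (0,∞)`. -/
theorem statement2
    (H : M → (E →L[ℝ] ℝ) → ℝ → ℝ)
    (hC3 : CondC3 I H) (hH1 : CondH1 H) (hH2 : CondH2 H) (hH3 : CondH3 H)
    (hA1 : CondA1 H)
    (um : M → ℝ) (hum : um ∈ Sminus I H) :
    ∃ δ₀ : ℝ, 0 < δ₀ ∧ ∃ m : ℝ, 0 < m ∧
      IsVSubEvol I H (fun x t => um x - δ₀ * Real.exp (-m * t)) ∧
      IsVSupEvol I H (fun x t => um x + δ₀ * Real.exp (-m * t)) := by
  obtain ⟨hsub, hsup⟩ := hum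
  obtain ⟨κ, -, hκ⟩ := hH3
  obtain ⟨a, ha⟩ := (isCompact_range hsub.1).bddBelow
  obtain ⟨b, hb⟩ := (isCompact_range hsub.1).bddAbove
  have hum_mem : ∀ x, um x ∈ Icc a b := fun x => ⟨ha ⟨x, rfl⟩, hb ⟨x, rfl⟩⟩
  obtain ⟨δ₀, hδ₀, m, hm, hbounds⟩ := exists_linear_bounds_near_zero_level hC3.continuous
    hC3.continuous_deriv hC3.differentiable hκ hA1 (hH2.isCompact_sublevel hC3 hH1 · · 1) a b
  exact ⟨δ₀, hδ₀, m, hm,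
    hsub.isVSubEvol_sub_exp hδ₀.le hm.le fun x p ε hε => (hbounds x p _ ε (hum_mem x) hε).1,
    hsup.isVSupEvol_add_exp hδ₀.le hm.le fun x p ε hε => (hbounds x p _ ε (hum_mem x) hε).2⟩
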